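/- The density g vanishes identically on the interval (0, 3/π²) and is strictly positive for every t > 3/π² (with t ≠ 12/π² where it is defined piecewise but also positive); that is, the spacing distribution of visible lattice points of ℤ² has a gap of size exactly 3/π² at the origin. -/

import Mathlib

/-- The limiting spacing density `g` for the radial projection of the visible
points of the integer lattice: `g t = 0` on `(0, 3/π²]`,
`g t = (6/(π²t²)) * log (π²t/3)` on `(3/π², 12/π²)`, and
`g t = (12/(π²t²)) * log (2 / (1 + √(1 - 12/(π²t))))` on `[12/π², ∞)`. -/
noncomputable def g (t : ℝ) : ℝ :=
  if t ≤ 3 / Real.pi ^ 2 then 0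
  else if t < 12 / Real.pi ^ 2 then
    6 / (Real.pi ^ 2 * t ^ 2) * Real.log (Real.pi ^ 2 * t / 3)
  else
    12 / (Real.pi ^ 2 * t ^ 2) *
      Real.log (2 / (1 + Real.sqrt (1 - 12 / (Real.pi ^ 2 * t))))

open Real

lemma g_eq_zero_of_le {t : ℝ} (ht : t ≤ 3 / π ^ 2) : g t = 0 := if_pos ht

lemma one_lt_pi_sq_mul_div_three {t : ℝ} (ht : 3 / π ^ 2 < t) : 1 < π ^ 2 * t / 3 := by
  rw [one_lt_div three_pos, mul_comm]
  exact (div_lt_iff₀ (by positivity)).1 ht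

-- For `x > 1` the square root is the junk value `0`, and the bound still holds.
lemma one_lt_two_div_one_add_sqrt_one_sub {x : ℝ} (hx : 0 < x) : 1 < 2 / (1 + √(1 - x)) := by
  have hsqrt : √(1 - x) < 1 := (sqrt_lt' one_pos).2 (by linarith)
  rw [one_lt_div (by positivity)]
  linarith

lemma g_pos_of_lt {t : ℝ} (ht : 3 / π ^ 2 < t) : 0 < g t := by
  have ht0 : 0 < t := (by positivity : (0 : ℝ) < 3 / π ^ 2).trans ht
  rw [g, if_neg ht.not_ge]
  split_ifs
  · exact mul_pos (by positivity) (log_pos (one_lt_pi_sq_mul_div_three ht))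
  · exact mul_pos (by positivity) (log_pos (one_lt_two_div_one_add_sqrt_one_sub (by positivity)))

/-- `g` vanishes identically on `(0, 3/π²)` and is strictly positive for every
`t > 3/π²`: the spacing distribution has a gap of size exactly `3/π²`. -/
theorem g_gap :
    (∀ t ∈ Set.Ioo (0 : ℝ) (3 / Real.pi ^ 2), g t = 0) ∧
    (∀ t : ℝ, 3 / Real.pi ^ 2 < t → 0 < g t) :=
  ⟨fun _ ht => g_eq_zero_of_le ht.2.le, fun _ => g_pos_of_lt⟩
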